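/- arXiv:1602.05471 — 2 statements merged into one kernel-verified Lean document; each statement's English description precedes it below -/
import Mathlib

section
/- With Q̄ the pasting of Q, Q₁, Q₂ at σ along Λ as above: if S is a nonnegative Q₁-local martingale, a nonnegative Q₂-local martingale, a nonnegative Q-local martingale, and σ is a stopping time such that E_{Q₁}[S_T | F_σ] < S_σ on a set of positive Q₁-probability contained in Λ, while E_{Q₂}[S_T | F_σ] ≤ S_σ Q₂-a.s., then there exists a stopping time τ ≤ σ with Q̄(E_{Q̄}[S_T | F_τ] < S_τ) > 0; in particular S is a strict Q̄-local martingale (not a true Q̄-martingale). -/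
open MeasureTheory Filter Set
open scoped ENNReal

/-!
Once `Q₁` and `Q₂` agree with `Q` on `F_σ`, the pasting formula says `Q̄ = Q₁|_Λ + Q₂|_Λᶜ`.
On `Λ` the measure `Q̄` is `Q₁`, so there `E_{Q̄}[S_T | F_σ]` is at most `E_{Q₁}[S_T | F_σ]`
(equal when `S_T` is `Q̄`-integrable; otherwise Lean's conditional expectation is `0`), and the
strict inequality at `σ` passes from `Q₁` to `Q̄`: take `τ = σ`.

If `S_T` is not `Q₁`-integrable, `E_{Q₁}[S_T | F_σ]` is the junk value `0`. But a nonnegative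
local martingale has nonincreasing expectations (truncate at a level `c`, use the martingale
property along the localizing sequence, and let `c → ∞`), so `E_{Q₁}[S_0] = ∞`. Since `Q̄ = Q₁` on
`F_σ ⊇ F_0`, also `E_{Q̄}[S_0] = ∞`, which no integrable `E_{Q̄}[S_T | F_0]` can dominate: take
`τ = 0`.

In both cases `τ` takes finitely many values, so optional sampling shows that `S` is not a
`Q̄`-martingale.
-/

noncomputable section

/-- Local martingale via a localizing sequence of stopping times. -/
def IsLocalMartingale {Ω : Type*} {m0 : MeasurableSpace Ω} (ℱ : Filtration ℝ m0)
    (X : ℝ → Ω → ℝ) (μ : Measure Ω) : Prop :=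
  ∃ τ : ℕ → Ω → ℝ, (∀ n, IsStoppingTime ℱ (fun ω => (τ n ω : WithTop ℝ))) ∧
    (∀ᵐ ω ∂μ, Tendsto (fun n => τ n ω) atTop atTop) ∧
    ∀ n, Martingale (stoppedProcess X (fun ω => (τ n ω : WithTop ℝ))) ℱ μ

section Pasting

variable {Ω : Type*} {m m0 : MeasurableSpace Ω} {μ ν : Measure Ω}

theorem trim_eq_trim_of_forall_eq (hm : m ≤ m0) (h : ∀ s, MeasurableSet[m] s → μ s = ν s) :
    μ.trim hm = ν.trim hm :=
  @Measure.ext _ m _ _ fun s hs => by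
    rw [trim_measurableSet_eq hm hs, trim_measurableSet_eq hm hs, h s hs]

theorem MeasureTheory.Integrable.of_trim_eq (hm : m ≤ m0) (h : μ.trim hm = ν.trim hm) {f : Ω → ℝ}
    (hf : StronglyMeasurable[m] f) (hfμ : Integrable f μ) : Integrable f ν :=
  integrable_of_integrable_trim hm (h ▸ hfμ.trim hm hf)

theorem integral_indicator_condExp_of_trim_eq (hm : m ≤ m0) [SigmaFinite (μ.trim hm)]
    (h : μ.trim hm = ν.trim hm) {Λ : Set Ω} (hΛ : MeasurableSet[m] Λ) {g : Ω → ℝ}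
    (hg : Integrable g μ) : ∫ ω, Λ.indicator (μ[g | m]) ω ∂ν = ∫ ω in Λ, g ω ∂μ := by
  have hsm := (stronglyMeasurable_condExp (m := m) (μ := μ) (f := g)).indicator hΛ
  rw [integral_trim hm hsm, ← h, ← integral_trim hm hsm, integral_indicator (hm _ hΛ),
    setIntegral_condExp hm hg hΛ]

theorem eq_restrict_add_restrict_compl_of_pasting (hm : m ≤ m0) {Q Q₁ Q₂ Q' : Measure Ω}
    [IsFiniteMeasure Q₁] [IsFiniteMeasure Q₂] [IsFiniteMeasure Q']
    (h₁ : Q₁.trim hm = Q.trim hm) (h₂ : Q₂.trim hm = Q.trim hm) {Λ : Set Ω}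
    (hΛ : MeasurableSet[m] Λ)
    (hQ' : ∀ A : Set Ω, MeasurableSet A → (Q' A).toReal =
      ∫ ω, (Q₁[A.indicator fun _ => (1 : ℝ) | m] ω * Λ.indicator (fun _ => (1 : ℝ)) ω
          + Q₂[A.indicator fun _ => (1 : ℝ) | m] ω * Λᶜ.indicator (fun _ => (1 : ℝ)) ω) ∂Q) :
    Q' = Q₁.restrict Λ + Q₂.restrict Λᶜ := by
  ext A hA
  have hpiece : ∀ (P : Measure Ω) [IsFiniteMeasure P], P.trim hm = Q.trim hm →
      ∀ B, MeasurableSet[m] B →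
        ∫ ω, B.indicator (P[A.indicator fun _ => (1 : ℝ) | m]) ω ∂Q = P.real (A ∩ B) ∧
        Integrable (B.indicator (P[A.indicator fun _ => (1 : ℝ) | m])) Q := by
    intro P _ hP B hB
    have hA1 : Integrable (A.indicator fun _ => (1 : ℝ)) P := (integrable_const 1).indicator hA
    refine ⟨?_, (integrable_condExp.indicator (hm _ hB)).of_trim_eq hm hP
      (stronglyMeasurable_condExp.indicator hB)⟩
    rw [integral_indicator_condExp_of_trim_eq hm hP hB hA1, integral_indicator_const _ hA,
      measureReal_restrict_apply hA, smul_eq_mul, mul_one]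
  obtain ⟨hI₁, hint₁⟩ := hpiece Q₁ h₁ Λ hΛ
  obtain ⟨hI₂, hint₂⟩ := hpiece Q₂ h₂ Λᶜ hΛ.compl
  rw [Measure.add_apply, Measure.restrict_apply hA, Measure.restrict_apply hA,
    ← ENNReal.toReal_eq_toReal_iff' (measure_ne_top _ _) (by finiteness), hQ' A hA,
    ENNReal.toReal_add (measure_ne_top _ _) (measure_ne_top _ _)]
  simp only [← indicator_mul_right, mul_one]
  rw [integral_add hint₁ hint₂, hI₁, hI₂, measureReal_def, measureReal_def]

theorem restrict_add_restrict_compl_trim (hm : m ≤ m0) (h : μ.trim hm = ν.trim hm)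
    {Λ : Set Ω} (hΛ : MeasurableSet[m] Λ) :
    (μ.restrict Λ + ν.restrict Λᶜ).trim hm = μ.trim hm := by
  refine @Measure.ext _ m _ _ fun s hs => ?_
  have hν : ν (s ∩ Λᶜ) = μ (s ∩ Λᶜ) := by
    rw [← trim_measurableSet_eq hm (hs.inter hΛ.compl), ← h,
      trim_measurableSet_eq hm (hs.inter hΛ.compl)]
  rw [trim_measurableSet_eq hm hs, trim_measurableSet_eq hm hs, Measure.add_apply,
    Measure.restrict_apply (hm _ hs), Measure.restrict_apply (hm _ hs), hν, ← sdiff_eq,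
    measure_inter_add_sdiff _ (hm _ hΛ)]

theorem restrict_add_restrict_compl_restrict {Λ : Set Ω} (hΛ : MeasurableSet Λ) :
    (μ.restrict Λ + ν.restrict Λᶜ).restrict Λ = μ.restrict Λ := by
  rw [Measure.restrict_add, Measure.restrict_restrict hΛ, Measure.restrict_restrict hΛ,
    inter_self, inter_compl_self, Measure.restrict_empty, add_zero]

theorem condExp_ae_le_of_restrict_eq (hm : m ≤ m0) [SigmaFinite (μ.trim hm)]
    [SigmaFinite (ν.trim hm)] {Λ : Set Ω} (hΛ : MeasurableSet[m] Λ)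
    (hμν : μ.restrict Λ = ν.restrict Λ) {f : Ω → ℝ} (hf : 0 ≤ᵐ[ν] f) (hfν : Integrable f ν) :
    μ[f | m] ≤ᵐ[ν.restrict Λ] ν[f | m] := by
  by_cases hfμ : Integrable f μ
  · have hμ := condExp_restrict_ae_eq_restrict hm hΛ hfμ
    rw [hμν] at hμ
    exact (hμ.symm.trans (condExp_restrict_ae_eq_restrict hm hΛ hfν)).le
  · rw [condExp_of_not_integrable hfμ]
    exact ae_restrict_of_ae (condExp_nonneg hf)

theorem measure_condExp_lt_pos_of_restrict_add_restrict_compl (hm : m ≤ m0)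
    [IsFiniteMeasure μ] [IsFiniteMeasure ν] {Λ : Set Ω} (hΛ : MeasurableSet[m] Λ)
    {f X : Ω → ℝ} (hf : 0 ≤ᵐ[μ] f) (hfμ : Integrable f μ)
    (hpos : 0 < μ {ω | ω ∈ Λ ∧ μ[f | m] ω < X ω}) :
    0 < (μ.restrict Λ + ν.restrict Λᶜ)
      {ω | (μ.restrict Λ + ν.restrict Λᶜ)[f | m] ω < X ω} := by
  set P := μ.restrict Λ + ν.restrict Λᶜ
  have hle : P[f | m] ≤ᵐ[μ.restrict Λ] μ[f | m] :=
    condExp_ae_le_of_restrict_eq hm hΛ (restrict_add_restrict_compl_restrict (hm _ hΛ)) hf hfμ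
  calc 0 < μ {ω | ω ∈ Λ ∧ μ[f | m] ω < X ω} := hpos
    _ = μ.restrict Λ {ω | μ[f | m] ω < X ω} := by
      rw [Measure.restrict_apply' (hm _ hΛ), inter_comm]; rfl
    _ ≤ μ.restrict Λ {ω | P[f | m] ω < X ω} :=
      measure_mono_ae (hle.mono fun ω hω (hlt : _ < _) => hω.trans_lt hlt)
    _ ≤ P {ω | P[f | m] ω < X ω} := Measure.le_add_right le_rfl _

theorem measure_lt_pos_of_lintegral_ofReal_eq_top {g X : Ω → ℝ} (hg : Integrable g μ)
    (hX : ∫⁻ ω, ENNReal.ofReal (X ω) ∂μ = ∞) : 0 < μ {ω | g ω < X ω} := by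
  refine pos_iff_ne_zero.mpr fun h0 => hg.lintegral_lt_top.ne (top_le_iff.mp ?_)
  calc ∞ = ∫⁻ ω, ENNReal.ofReal (X ω) ∂μ := hX.symm
    _ ≤ ∫⁻ ω, ENNReal.ofReal (g ω) ∂μ := lintegral_mono_ae <|
      (measure_eq_zero_iff_ae_notMem.mp h0).mono fun ω hω =>
        ENNReal.ofReal_le_ofReal (not_lt.mp hω)

end Pasting

section LocalMartingale

variable {Ω : Type*} {m0 : MeasurableSpace Ω} {μ : Measure Ω}

theorem MeasureTheory.Martingale.measure_condExp_lt_stoppedValue_eq_zero [IsFiniteMeasure μ]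
    {ℱ : Filtration ℝ m0} {S : ℝ → Ω → ℝ} (hS : Martingale S ℱ μ) {τ : Ω → ℝ}
    (hτ : IsStoppingTime ℱ fun ω => (τ ω : WithTop ℝ)) {T : ℝ} (hτT : ∀ ω, τ ω ≤ T)
    (hτc : (range τ).Countable) :
    μ {ω | μ[S T | hτ.measurableSpace] ω < S (τ ω) ω} = 0 := by
  have hOS := hS.stoppedValue_ae_eq_condExp_of_le_const_of_countable_range hτ
    (fun ω => WithTop.coe_le_coe.mpr (hτT ω)) (range_comp WithTop.some τ ▸ hτc.image _)
  rw [measure_eq_zero_iff_ae_notMem]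
  filter_upwards [hOS] with ω hω
  exact fun hlt => (hlt.trans_le hω.le).false

theorem MeasureTheory.Martingale.integral_min_le [IsFiniteMeasure μ] {ι : Type*} [Preorder ι]
    {ℱ : Filtration ι m0} {Y : ι → Ω → ℝ} (hY : Martingale Y ℱ μ) {s t : ι} (hst : s ≤ t)
    (c : ℝ) : ∫ ω, min (Y t ω) c ∂μ ≤ ∫ ω, min (Y s ω) c ∂μ := by
  have hint : ∀ r, Integrable (fun ω => min (Y r ω) c) μ := fun r =>
    (hY.integrable r).inf (integrable_const c)
  have hcond : μ[fun ω => min (Y t ω) c | ℱ s] ≤ᵐ[μ] fun ω => min (Y s ω) c := by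
    have hY : μ[fun ω => min (Y t ω) c | ℱ s] ≤ᵐ[μ] Y s :=
      (condExp_mono (hint t) (hY.integrable t) (.of_forall fun ω => min_le_left _ _)).trans
        (hY.condExp_ae_eq hst).le
    have hc : μ[fun ω => min (Y t ω) c | ℱ s] ≤ᵐ[μ] fun _ => c := by
      simpa only [condExp_const (ℱ.le s)] using
        condExp_mono (m := ℱ s) (hint t) (integrable_const c)
          (.of_forall fun ω => min_le_right _ _)
    filter_upwards [hY, hc] with ω using le_min
  calc ∫ ω, min (Y t ω) c ∂μ = ∫ ω, μ[fun ω => min (Y t ω) c | ℱ s] ω ∂μ :=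
        (integral_condExp (ℱ.le s)).symm
    _ ≤ ∫ ω, min (Y s ω) c ∂μ := integral_mono_ae integrable_condExp (hint s) hcond

theorem IsLocalMartingale.lintegral_ofReal_min_le [IsFiniteMeasure μ] {ℱ : Filtration ℝ m0}
    {S : ℝ → Ω → ℝ} (hS : IsLocalMartingale ℱ S μ) (hnonneg : ∀ t ω, 0 ≤ S t ω) {s t : ℝ}
    (hst : s ≤ t) {c : ℝ} (hc : 0 ≤ c) :
    ∫⁻ ω, ENNReal.ofReal (min (S t ω) c) ∂μ ≤ ∫⁻ ω, ENNReal.ofReal (min (S s ω) c) ∂μ := by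
  obtain ⟨τ, -, hτ_top, hmart⟩ := hS
  set Y : ℕ → ℝ → Ω → ℝ := fun n => stoppedProcess S fun ω => (τ n ω : WithTop ℝ)
  have hlim : ∀ r, Tendsto (fun n => ∫⁻ ω, ENNReal.ofReal (min (Y n r ω) c) ∂μ) atTop
      (nhds (∫⁻ ω, ENNReal.ofReal (min (S r ω) c) ∂μ)) := by
    intro r
    refine tendsto_lintegral_of_dominated_convergence (fun _ => ENNReal.ofReal c)
      (fun n => ((((hmart n).stronglyMeasurable r).mono (ℱ.le r)).measurable.min
        measurable_const).ennreal_ofReal)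
      (fun n => .of_forall fun ω => ENNReal.ofReal_le_ofReal (min_le_right _ _))
      (lintegral_const_lt_top ENNReal.ofReal_ne_top).ne ?_
    filter_upwards [hτ_top] with ω hω
    refine tendsto_const_nhds.congr' ?_
    filter_upwards [hω.eventually_ge_atTop r] with n hn
    simp only [Y, stoppedProcess_eq_of_le (τ := fun ω => (τ n ω : WithTop ℝ))
      (WithTop.coe_le_coe.mpr hn)]
  have hY : ∀ n, ∫⁻ ω, ENNReal.ofReal (min (Y n t ω) c) ∂μ
      ≤ ∫⁻ ω, ENNReal.ofReal (min (Y n s ω) c) ∂μ := by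
    intro n
    have hint : ∀ r, Integrable (fun ω => min (Y n r ω) c) μ := fun r =>
      ((hmart n).integrable r).inf (integrable_const c)
    have hnn : ∀ r, 0 ≤ᵐ[μ] fun ω => min (Y n r ω) c := fun r =>
      .of_forall fun ω => le_min (hnonneg _ ω) hc
    rw [← ofReal_integral_eq_lintegral_ofReal (hint t) (hnn t),
      ← ofReal_integral_eq_lintegral_ofReal (hint s) (hnn s)]
    exact ENNReal.ofReal_le_ofReal ((hmart n).integral_min_le hst c)
  exact le_of_tendsto_of_tendsto' (hlim t) (hlim s) hY

theorem IsLocalMartingale.lintegral_ofReal_le [IsFiniteMeasure μ] {ℱ : Filtration ℝ m0}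
    {S : ℝ → Ω → ℝ} (hS : IsLocalMartingale ℱ S μ) (hnonneg : ∀ t ω, 0 ≤ S t ω) {s t : ℝ}
    (hst : s ≤ t) (hSt : Measurable (S t)) :
    ∫⁻ ω, ENNReal.ofReal (S t ω) ∂μ ≤ ∫⁻ ω, ENNReal.ofReal (S s ω) ∂μ := by
  have htrunc : ∀ ω, ENNReal.ofReal (S t ω) = ⨆ k : ℕ, ENNReal.ofReal (min (S t ω) k) := by
    intro ω
    refine le_antisymm (le_iSup_of_le ⌈S t ω⌉₊ ?_)
      (iSup_le fun k => ENNReal.ofReal_le_ofReal (min_le_left _ _))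
    rw [min_eq_left (Nat.le_ceil _)]
  calc ∫⁻ ω, ENNReal.ofReal (S t ω) ∂μ
      = ⨆ k : ℕ, ∫⁻ ω, ENNReal.ofReal (min (S t ω) k) ∂μ := by
        simp_rw [htrunc]
        exact lintegral_iSup (fun k => (hSt.min measurable_const).ennreal_ofReal)
          fun a b hab ω => ENNReal.ofReal_le_ofReal (min_le_min le_rfl (by exact_mod_cast hab))
    _ ≤ ∫⁻ ω, ENNReal.ofReal (S s ω) ∂μ := iSup_le fun k =>
        (hS.lintegral_ofReal_min_le hnonneg hst k.cast_nonneg).trans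
          (lintegral_mono fun ω => ENNReal.ofReal_le_ofReal (min_le_left _ _))

theorem IsLocalMartingale.lintegral_ofReal_eq_top_of_not_integrable [IsFiniteMeasure μ]
    {ℱ : Filtration ℝ m0} {S : ℝ → Ω → ℝ} (hS : IsLocalMartingale ℱ S μ)
    (hnonneg : ∀ t ω, 0 ≤ S t ω) {s t : ℝ} (hst : s ≤ t) (hSt : Measurable (S t))
    (hint : ¬ Integrable (S t) μ) : ∫⁻ ω, ENNReal.ofReal (S s ω) ∂μ = ∞ := by
  have ht : ∫⁻ ω, ENNReal.ofReal (S t ω) ∂μ = ∞ := not_not.mp <|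
    (lintegral_ofReal_ne_top_iff_integrable hSt.aestronglyMeasurable
      (.of_forall (hnonneg t))).not.mpr hint
  rw [← top_le_iff, ← ht]
  exact hS.lintegral_ofReal_le hnonneg hst hSt

end LocalMartingale

theorem stmt6_general {Ω : Type*} {m0 : MeasurableSpace Ω} (ℱ : Filtration ℝ m0)
    (Q Q1 Q2 Qbar : Measure Ω) [IsProbabilityMeasure Q1]
    [IsProbabilityMeasure Q2] [IsProbabilityMeasure Qbar]
    (σ : Ω → ℝ) (hσ : IsStoppingTime ℱ (fun ω => (σ ω : WithTop ℝ))) (hσfin : (Set.range σ).Finite)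
    (Λ : Set Ω) (hΛ : MeasurableSet[hσ.measurableSpace] Λ)
    (hQ1σ : ∀ A : Set Ω, MeasurableSet[hσ.measurableSpace] A → Q1 A = Q A)
    (hQ2σ : ∀ A : Set Ω, MeasurableSet[hσ.measurableSpace] A → Q2 A = Q A)
    (hQbar : ∀ A : Set Ω, MeasurableSet A → (Qbar A).toReal =
      ∫ ω, (MeasureTheory.condExp hσ.measurableSpace Q1 (A.indicator fun _ => (1 : ℝ)) ω
            * Λ.indicator (fun _ => (1 : ℝ)) ω
          + MeasureTheory.condExp hσ.measurableSpace Q2 (A.indicator fun _ => (1 : ℝ)) ω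
            * Λᶜ.indicator (fun _ => (1 : ℝ)) ω) ∂Q)
    (S : ℝ → Ω → ℝ) (T : ℝ)
    (hadapted : Adapted ℱ S)
    (hnonneg : ∀ t ω, 0 ≤ S t ω)
    (hloc1 : IsLocalMartingale ℱ S Q1)
    (hστ0 : ∀ ω, 0 ≤ σ ω) (hστT : ∀ ω, σ ω ≤ T)
    (hstrict : 0 < Q1 {ω | ω ∈ Λ ∧
      MeasureTheory.condExp hσ.measurableSpace Q1 (S T) ω < S (σ ω) ω}) :
    (∃ τ : Ω → ℝ, ∃ hτ : IsStoppingTime ℱ (fun ω => (τ ω : WithTop ℝ)), (∀ ω, τ ω ≤ σ ω) ∧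
      0 < Qbar {ω | MeasureTheory.condExp hτ.measurableSpace Qbar (S T) ω < S (τ ω) ω}) ∧
    ¬ Martingale S ℱ Qbar := by
  have hm := hσ.measurableSpace_le
  have h₁ := trim_eq_trim_of_forall_eq hm hQ1σ
  have h₂ := trim_eq_trim_of_forall_eq hm hQ2σ
  have hpaste := eq_restrict_add_restrict_compl_of_pasting hm h₁ h₂ hΛ hQbar
  obtain ⟨τ, hτ, hτσ, hτc, hpos⟩ : ∃ τ : Ω → ℝ,
      ∃ hτ : IsStoppingTime ℱ fun ω => (τ ω : WithTop ℝ), (∀ ω, τ ω ≤ σ ω) ∧ (range τ).Countable ∧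
      0 < Qbar {ω | Qbar[S T | hτ.measurableSpace] ω < S (τ ω) ω} := by
    by_cases hint : Integrable (S T) Q1
    · refine ⟨σ, hσ, fun _ => le_rfl, hσfin.countable, ?_⟩
      rw [hpaste]
      exact measure_condExp_lt_pos_of_restrict_add_restrict_compl hm hΛ
        (.of_forall (hnonneg T)) hint hstrict
    · refine ⟨fun _ => 0, isStoppingTime_const ℱ 0, hστ0,
        (countable_singleton 0).mono range_const_subset, ?_⟩
      obtain ⟨ω₀⟩ := nonempty_of_isProbabilityMeasure Q1
      have hS0 : Measurable[hσ.measurableSpace] (S 0) := (hadapted 0).mono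
        (hσ.le_measurableSpace_of_const_le fun ω => WithTop.coe_le_coe.mpr (hστ0 ω)) le_rfl
      have hS0_top : ∫⁻ ω, ENNReal.ofReal (S 0 ω) ∂Qbar = ∞ := by
        rw [← lintegral_trim hm hS0.ennreal_ofReal, hpaste,
          restrict_add_restrict_compl_trim hm (h₁.trans h₂.symm) hΛ,
          lintegral_trim hm hS0.ennreal_ofReal]
        exact hloc1.lintegral_ofReal_eq_top_of_not_integrable hnonneg
          ((hστ0 ω₀).trans (hστT ω₀)) ((hadapted T).mono (ℱ.le T) le_rfl) hint
      exact measure_lt_pos_of_lintegral_ofReal_eq_top integrable_condExp hS0_top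
  exact ⟨⟨τ, hτ, hτσ, hpos⟩, fun hM => hpos.ne'
    (hM.measure_condExp_lt_stoppedValue_eq_zero hτ (fun ω => (hτσ ω).trans (hστT ω)) hτc)⟩

/-- Corollary to Proposition 3.13: if `S` is a strict `Q₁`-local martingale (strictness
witnessed on a subset of `Λ` at `σ`) then the pasting `Q̄` of `Q, Q₁, Q₂` at `σ` along `Λ`
also makes `S` a strict local martingale. -/
theorem stmt6 {Ω : Type*} {m0 : MeasurableSpace Ω} (ℱ : Filtration ℝ m0)
    (Q Q1 Q2 Qbar : Measure Ω) [IsProbabilityMeasure Q] [IsProbabilityMeasure Q1]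
    [IsProbabilityMeasure Q2] [IsProbabilityMeasure Qbar]
    (σ : Ω → ℝ) (hσ : IsStoppingTime ℱ (fun ω => (σ ω : WithTop ℝ))) (hσfin : (Set.range σ).Finite)
    (Λ : Set Ω) (hΛ : MeasurableSet[hσ.measurableSpace] Λ)
    (hQ1σ : ∀ A : Set Ω, MeasurableSet[hσ.measurableSpace] A → Q1 A = Q A)
    (hQ2σ : ∀ A : Set Ω, MeasurableSet[hσ.measurableSpace] A → Q2 A = Q A)
    (hQbar : ∀ A : Set Ω, MeasurableSet A → (Qbar A).toReal =
      ∫ ω, (MeasureTheory.condExp hσ.measurableSpace Q1 (A.indicator fun _ => (1 : ℝ)) ω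
            * Λ.indicator (fun _ => (1 : ℝ)) ω
          + MeasureTheory.condExp hσ.measurableSpace Q2 (A.indicator fun _ => (1 : ℝ)) ω
            * Λᶜ.indicator (fun _ => (1 : ℝ)) ω) ∂Q)
    (S : ℝ → Ω → ℝ) (T : ℝ)
    (hadapted : Adapted ℱ S)
    (hrc : ∀ ω t, ContinuousWithinAt (fun s => S s ω) (Set.Ici t) t)
    (hnonneg : ∀ t ω, 0 ≤ S t ω)
    (hloc1 : IsLocalMartingale ℱ S Q1)
    (hloc2 : IsLocalMartingale ℱ S Q2)
    (hlocQ : IsLocalMartingale ℱ S Q)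
    (hστ0 : ∀ ω, 0 ≤ σ ω) (hστT : ∀ ω, σ ω ≤ T)
    (hstrict : 0 < Q1 {ω | ω ∈ Λ ∧
      MeasureTheory.condExp hσ.measurableSpace Q1 (S T) ω < S (σ ω) ω})
    (hle2 : ∀ᵐ ω ∂Q2, MeasureTheory.condExp hσ.measurableSpace Q2 (S T) ω ≤ S (σ ω) ω) :
    (∃ τ : Ω → ℝ, ∃ hτ : IsStoppingTime ℱ (fun ω => (τ ω : WithTop ℝ)), (∀ ω, τ ω ≤ σ ω) ∧
      0 < Qbar {ω | MeasureTheory.condExp hτ.measurableSpace Qbar (S T) ω < S (τ ω) ω}) ∧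
    ¬ Martingale S ℱ Qbar :=
  stmt6_general ℱ Q Q1 Q2 Qbar σ hσ hσfin Λ hΛ hQ1σ hQ2σ hQbar S T hadapted hnonneg hloc1 hστ0 hστT
    hstrict

end
end

section
/- Suppose every Q-market (Q ∈ Q) is complete so that the superreplication duality sup_{Q∈Q} E_Q[S_T] = inf{x ∈ ℝ : ∃ admissible H with x + (H·S)_T ≥ S_T Q-a.s. for all Q ∈ Q} holds. If the market satisfies robust no dominance, then there is no robust bubble at time 0, i.e., S_0 = sup_{Q∈Q} E_Q[S_T]. -/
/-!
Each `Q ∈ 𝒬` makes `S` a supermartingale, so `sup_Q E_Q[S_T] ≤ S_0`. Conversely, a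
superreplicating strategy started from capital `x < S_0` strictly dominates `S` once the
cash surplus `S_0 - x` is added, which robust no dominance forbids; hence `S_0` is below
every superreplication price, and by the duality below `sup_Q E_Q[S_T]`.
-/

open MeasureTheory Set

noncomputable section

section

variable {Ω : Type*} {m0 : MeasurableSpace Ω}

theorem measure_setOf_pos_of_ae {μ : Measure Ω} [NeZero μ] {p : Ω → Prop}
    (h : ∀ᵐ ω ∂μ, p ω) : 0 < μ {ω | p ω} :=
  pos_iff_ne_zero.2 (frequently_ae_iff.1 h.frequently)

theorem le_of_superreplicates_of_not_dominates {𝒬 : Set (Measure Ω)} {Q₀ : Measure Ω}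
    (hQ₀ : Q₀ ∈ 𝒬) [NeZero Q₀] {X G c : Ω → ℝ} {x s0 : ℝ} (hc : ∀ ω, c ω = s0)
    (hx : ∀ Q ∈ 𝒬, ∀ᵐ ω ∂Q, X ω ≤ x + G ω)
    (hND : ¬ ((∀ Q ∈ 𝒬, ∀ᵐ ω ∂Q, X ω ≤ c ω + G ω) ∧
      ∃ Q ∈ 𝒬, 0 < Q {ω | X ω < c ω + G ω})) :
    s0 ≤ x := by
  by_contra! hlt
  have hstrict : ∀ Q ∈ 𝒬, ∀ᵐ ω ∂Q, X ω < c ω + G ω := fun Q hQ =>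
    (hx Q hQ).mono fun ω hω => by rw [hc]; linarith
  exact hND ⟨fun Q hQ => (hstrict Q hQ).mono fun _ => le_of_lt,
    Q₀, hQ₀, measure_setOf_pos_of_ae (hstrict Q₀ hQ₀)⟩

end

theorem stmt16_general {Ω : Type*} {m0 : MeasurableSpace Ω} {ι : Type*}
    (𝒬 : Set (Measure Ω)) (h𝒬 : 𝒬.Nonempty)
    (hprob : ∀ Q ∈ 𝒬, IsProbabilityMeasure Q)
    (Gain : ι → ℝ → Ω → ℝ) (S : ℝ → Ω → ℝ) (T : ℝ)
    (s0 : ℝ) (hS0 : ∀ ω, S 0 ω = s0)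
    -- `S` is a `Q`-local martingale, hence a supermartingale, for each `Q ∈ 𝒬`:
    (hsuper : ∀ Q ∈ 𝒬, ∫ ω, S T ω ∂Q ≤ s0)
    (A : Set ℝ)
    (hA : A = {x : ℝ | ∃ H : ι, ∀ Q ∈ 𝒬, ∀ᵐ ω ∂Q, S T ω ≤ x + Gain H T ω})
    (hAne : A.Nonempty)
    -- superreplication duality (completeness of each `Q`-market):
    (hdual : (⨆ Q : 𝒬, ∫ ω, S T ω ∂(Q : Measure Ω)) = sInf A)
    -- robust no dominance:
    (hRND : ¬ ∃ H : ι,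
      (∀ Q ∈ 𝒬, ∀ᵐ ω ∂Q, S T ω ≤ S 0 ω + Gain H T ω) ∧
      ∃ Q ∈ 𝒬, 0 < Q {ω | S T ω < S 0 ω + Gain H T ω}) :
    s0 = ⨆ Q : 𝒬, ∫ ω, S T ω ∂(Q : Measure Ω) := by
  have : Nonempty 𝒬 := h𝒬.to_subtype
  obtain ⟨Q₀, hQ₀⟩ := h𝒬
  have := hprob Q₀ hQ₀
  have hsup_le : (⨆ Q : 𝒬, ∫ ω, S T ω ∂(Q : Measure Ω)) ≤ s0 :=
    ciSup_le fun Q => hsuper Q Q.2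
  have hs0_le : s0 ≤ sInf A := le_csInf hAne fun x hx => by
    rw [hA] at hx
    obtain ⟨H, hH⟩ := hx
    exact le_of_superreplicates_of_not_dominates hQ₀ hS0 hH fun hdom => hRND ⟨H, hdom⟩
  exact le_antisymm (hdual ▸ hs0_le) hsup_le

/-- Lemma 3.17: if every `Q`-market is complete so that the superreplication duality holds,
and the market satisfies robust no dominance, then there is no robust bubble at time `0`:
`S_0 = sup_{Q∈𝒬} E_Q[S_T]`. -/
theorem stmt16 {Ω : Type*} {m0 : MeasurableSpace Ω} {ι : Type*}
    (𝒬 : Set (Measure Ω)) (h𝒬 : 𝒬.Nonempty)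
    (hprob : ∀ Q ∈ 𝒬, IsProbabilityMeasure Q)
    (Gain : ι → ℝ → Ω → ℝ) (S : ℝ → Ω → ℝ) (T : ℝ)
    (s0 : ℝ) (hS0 : ∀ ω, S 0 ω = s0)
    (hSint : ∀ Q ∈ 𝒬, Integrable (S T) Q)
    -- `S` is a `Q`-local martingale, hence a supermartingale, for each `Q ∈ 𝒬`:
    (hsuper : ∀ Q ∈ 𝒬, ∫ ω, S T ω ∂Q ≤ s0)
    -- admissibility: gains from trading are `Q`-supermartingales started at `0`:
    (hGain : ∀ H : ι, ∀ Q ∈ 𝒬, Integrable (Gain H T) Q ∧ ∫ ω, Gain H T ω ∂Q ≤ 0)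
    (A : Set ℝ)
    (hA : A = {x : ℝ | ∃ H : ι, ∀ Q ∈ 𝒬, ∀ᵐ ω ∂Q, S T ω ≤ x + Gain H T ω})
    (hAne : A.Nonempty)
    -- superreplication duality (completeness of each `Q`-market):
    (hdual : (⨆ Q : 𝒬, ∫ ω, S T ω ∂(Q : Measure Ω)) = sInf A)
    -- robust no dominance:
    (hRND : ¬ ∃ H : ι,
      (∀ Q ∈ 𝒬, ∀ᵐ ω ∂Q, S T ω ≤ S 0 ω + Gain H T ω) ∧
      ∃ Q ∈ 𝒬, 0 < Q {ω | S T ω < S 0 ω + Gain H T ω}) :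
    s0 = ⨆ Q : 𝒬, ∫ ω, S T ω ∂(Q : Measure Ω) :=
  stmt16_general (m0 := m0) 𝒬 h𝒬 hprob Gain S T s0 hS0 hsuper A hA hAne hdual hRND

end
end
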